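/- arXiv:1603.05579 — 2 statements merged into one kernel-verified Lean document; each statement's English description precedes it below -/
import Mathlib

section
/- Assume each cost function c_y is continuous on Ω (Reg') and that for all y ≠ z in Y and every t ∈ ℝ the level set {x ∈ Ω : c(x,y) − c(x,z) = t} has Lebesgue measure zero (Twist'). Let ρ be a bounded probability density supported in a compact set X ⊆ Ω and ν = ∑_{y∈Y} ν_y δ_y a probability measure on Y. Then ψ : Y → ℝ is a global maximizer of the Kantorovich functional Φ if and only if ∫_{Lag_y(ψ)} ρ(x) dx = ν_y for every y ∈ Y. -/
open MeasureTheory Set Filter Topology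

/-!
Write `m_ψ(y) = ∫_{Lag_y(ψ)} ρ`. By (Twist') the Laguerre cells of any `ψ` cover `Ω` and
overlap only in null sets, and on `Lag_y(ψ)` the minimum `min_z (c_z + φ_z)` is at most
`c_y + ψ_y + (φ_y - ψ_y)`, with equality at `φ = ψ`. Integrating against `ρ` shows that
`m_ψ - ν` is a supergradient of `Φ` at every `ψ`:
`Φ(φ) ≤ Φ(ψ) + ∑_y (φ_y - ψ_y) (m_ψ(y) - ν_y)`.
Hence `m_ψ = ν` makes `ψ` a maximiser. Conversely, if `ψ` is a maximiser, the supergradient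
inequality at `ψ - t e_y` gives `ν_y ≤ m_{ψ - t e_y}(y)` for `t > 0`; these cells decrease to
`Lag_y(ψ)` as `t ↓ 0`, so `ν ≤ m_ψ`, and equality follows since both have total mass one.
-/

theorem ContinuousOn.iInf_fintype {E L ι : Type*} [TopologicalSpace E]
    [ConditionallyCompleteLattice L] [TopologicalSpace L] [ContinuousInf L]
    [Fintype ι] [Nonempty ι] {s : Set E} {f : ι → E → L} (hf : ∀ i, ContinuousOn (f i) s) :
    ContinuousOn (fun x => ⨅ i, f i x) s := by
  simp_rw [← Finset.inf'_univ_eq_ciInf]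
  exact ContinuousOn.finset_inf'_apply Finset.univ_nonempty fun i _ => hf i

section LaguerreCell

variable {E Y : Type*} {Ω : Set E} {c : E → Y → ℝ} {ψ : Y → ℝ} {x : E} {y z : Y}

def laguerreCell (Ω : Set E) (c : E → Y → ℝ) (ψ : Y → ℝ) (y : Y) : Set E :=
  {x ∈ Ω | ∀ z, c x y + ψ y ≤ c x z + ψ z}

theorem laguerreCell_subset : laguerreCell Ω c ψ y ⊆ Ω := fun _ hx => hx.1

theorem iInf_eq_of_mem_laguerreCell [Finite Y] (hx : x ∈ laguerreCell Ω c ψ y) :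
    ⨅ z, c x z + ψ z = c x y + ψ y :=
  have : Nonempty Y := ⟨y⟩
  le_antisymm (ciInf_le (finite_range _).bddBelow y) (le_ciInf hx.2)

theorem iUnion_laguerreCell [Finite Y] [Nonempty Y] : ⋃ y, laguerreCell Ω c ψ y = Ω := by
  refine Subset.antisymm (iUnion_subset fun _ => laguerreCell_subset) fun x hx => ?_
  obtain ⟨y, hy⟩ := Finite.exists_min fun y => c x y + ψ y
  exact mem_iUnion.2 ⟨y, hx, hy⟩

theorem laguerreCell_inter_subset :
    laguerreCell Ω c ψ y ∩ laguerreCell Ω c ψ z ⊆ {x ∈ Ω | c x y - c x z = ψ z - ψ y} :=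
  fun _ ⟨⟨hxΩ, hy⟩, ⟨_, hz⟩⟩ => ⟨hxΩ, by linarith [hy z, hz y]⟩

theorem mem_laguerreCell_sub_single [DecidableEq Y] {t : ℝ} :
    x ∈ laguerreCell Ω c (ψ - Pi.single y t) y ↔
      x ∈ Ω ∧ ∀ z, z ≠ y → c x y + ψ y ≤ c x z + ψ z + t := by
  refine and_congr_right fun _ => forall_congr' fun z => ?_
  by_cases hz : z = y
  · subst hz
    simp
  · simp only [Pi.sub_apply, Pi.single_eq_same, Pi.single_eq_of_ne hz, sub_zero]
    exact ⟨fun h _ => by linarith, fun h => by linarith [h hz]⟩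

theorem laguerreCell_sub_single_mono [DecidableEq Y] {s t : ℝ} (hst : s ≤ t) :
    laguerreCell Ω c (ψ - Pi.single y s) y ⊆ laguerreCell Ω c (ψ - Pi.single y t) y := by
  simp only [subset_def, mem_laguerreCell_sub_single]
  exact fun x ⟨hxΩ, hx⟩ => ⟨hxΩ, fun z hz => (hx z hz).trans (by linarith)⟩

theorem iInter_laguerreCell_sub_single [DecidableEq Y] :
    ⋂ n : ℕ, laguerreCell Ω c (ψ - Pi.single y (1 / ((n : ℝ) + 1))) y = laguerreCell Ω c ψ y := by
  refine Subset.antisymm (fun x hx => ?_) fun x hx => mem_iInter.2 fun n => ?_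
  · have hx' := fun n => mem_laguerreCell_sub_single.1 (mem_iInter.1 hx n)
    have h0 : ψ = ψ - Pi.single y 0 := by simp
    rw [h0, mem_laguerreCell_sub_single]
    refine ⟨(hx' 0).1, fun z hz => le_of_forall_pos_lt_add fun ε hε => ?_⟩
    obtain ⟨n, hn⟩ := exists_nat_one_div_lt hε
    linarith [(hx' n).2 z hz]
  · rw [mem_laguerreCell_sub_single]
    exact ⟨hx.1, fun z _ => by linarith [hx.2 z, Nat.one_div_pos_of_nat (α := ℝ) (n := n)]⟩

variable [TopologicalSpace E]

theorem isOpen_diff_laguerreCell (hΩ : IsOpen Ω) (hc : ∀ y, ContinuousOn (fun x => c x y) Ω) :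
    IsOpen (Ω \ laguerreCell Ω c ψ y) := by
  have : Ω \ laguerreCell Ω c ψ y =
      ⋃ z, Ω ∩ (fun x => c x y + ψ y - (c x z + ψ z)) ⁻¹' Ioi 0 := by
    ext x
    simp [laguerreCell]
  rw [this]
  exact isOpen_iUnion fun z =>
    (((hc y).add_const _).sub ((hc z).add_const _)).isOpen_inter_preimage hΩ isOpen_Ioi

variable [MeasurableSpace E] [OpensMeasurableSpace E] {μ : Measure E}

theorem measurableSet_laguerreCell (hΩ : IsOpen Ω) (hc : ∀ y, ContinuousOn (fun x => c x y) Ω) :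
    MeasurableSet (laguerreCell Ω c ψ y) := by
  rw [← sdiff_sdiff_cancel_left (laguerreCell_subset (ψ := ψ) (y := y))]
  exact hΩ.measurableSet.diff (isOpen_diff_laguerreCell hΩ hc).measurableSet

theorem le_setIntegral_laguerreCell [DecidableEq Y] {ρ : E → ℝ} {a : ℝ} (hΩ : IsOpen Ω)
    (hc : ∀ y, ContinuousOn (fun x => c x y) Ω) (hρ : Integrable ρ μ)
    (h : ∀ t > 0, a ≤ ∫ x in laguerreCell Ω c (ψ - Pi.single y t) y, ρ x ∂μ) :
    a ≤ ∫ x in laguerreCell Ω c ψ y, ρ x ∂μ := by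
  rw [← iInter_laguerreCell_sub_single]
  refine ge_of_tendsto (tendsto_setIntegral_of_antitone (fun n => measurableSet_laguerreCell hΩ hc)
    (fun _ _ hmn => laguerreCell_sub_single_mono (Nat.one_div_le_one_div hmn)) ⟨0, hρ.integrableOn⟩)
    (Eventually.of_forall fun n => h _ Nat.one_div_pos_of_nat)

theorem setIntegral_eq_sum_setIntegral_laguerreCell [Fintype Y] [Nonempty Y] {X : Set E}
    {G : E → ℝ} (hΩ : IsOpen Ω) (hc : ∀ y, ContinuousOn (fun x => c x y) Ω)
    (hTwist : ∀ y z, y ≠ z → ∀ t : ℝ, μ {x ∈ Ω | c x y - c x z = t} = 0) (hXΩ : X ⊆ Ω)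
    (hG : Integrable G μ) (hG0 : ∀ x, x ∉ X → G x = 0) (ψ : Y → ℝ) :
    ∫ x in X, G x ∂μ = ∑ y, ∫ x in laguerreCell Ω c ψ y, G x ∂μ :=
  calc ∫ x in X, G x ∂μ = ∫ x in Ω, G x ∂μ :=
        (setIntegral_eq_of_subset_of_forall_sdiff_eq_zero hΩ.measurableSet hXΩ
          fun x hx => hG0 x hx.2).symm
    _ = ∫ x in ⋃ y, laguerreCell Ω c ψ y, G x ∂μ := by rw [iUnion_laguerreCell]
    _ = ∑ y, ∫ x in laguerreCell Ω c ψ y, G x ∂μ := by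
        rw [integral_iUnion_ae (fun y => (measurableSet_laguerreCell hΩ hc).nullMeasurableSet)
          (fun y z hyz => measure_mono_null laguerreCell_inter_subset (hTwist y z hyz _))
          hG.integrableOn, tsum_fintype]

theorem setIntegral_iInf_mul_le [T2Space E] [Fintype Y] [Nonempty Y] {X : Set E} {ρ : E → ℝ}
    (hΩ : IsOpen Ω) (hc : ∀ y, ContinuousOn (fun x => c x y) Ω)
    (hTwist : ∀ y z, y ≠ z → ∀ t : ℝ, μ {x ∈ Ω | c x y - c x z = t} = 0)
    (hX : IsCompact X) (hXΩ : X ⊆ Ω) (hρ : Integrable ρ μ) (hρ0 : ∀ x, x ∉ X → ρ x = 0)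
    (hρnn : ∀ x, 0 ≤ ρ x) (φ ψ : Y → ℝ) :
    ∫ x in X, (⨅ y, c x y + φ y) * ρ x ∂μ ≤ ∫ x in X, (⨅ y, c x y + ψ y) * ρ x ∂μ +
      ∑ y, (φ y - ψ y) * ∫ x in laguerreCell Ω c ψ y, ρ x ∂μ := by
  have hint : ∀ φ : Y → ℝ, IntegrableOn (fun x => (⨅ y, c x y + φ y) * ρ x) X μ := fun φ =>
    hρ.integrableOn.continuousOn_mul
      (ContinuousOn.iInf_fintype fun y => ((hc y).mono hXΩ).add_const _) hX
  set D : E → ℝ := fun x => (⨅ y, c x y + φ y) * ρ x - (⨅ y, c x y + ψ y) * ρ x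
  have hD : Integrable D μ := ((hint φ).sub (hint ψ)).integrable_of_forall_notMem_eq_zero
    fun x hx => by simp [hρ0 x hx]
  have hcell : ∀ y, ∫ x in laguerreCell Ω c ψ y, D x ∂μ ≤
      (φ y - ψ y) * ∫ x in laguerreCell Ω c ψ y, ρ x ∂μ := by
    intro y
    rw [← integral_const_mul]
    refine setIntegral_mono_on hD.integrableOn (hρ.const_mul _).integrableOn
      (measurableSet_laguerreCell hΩ hc) fun x hx => ?_
    have hφ : ⨅ z, c x z + φ z ≤ c x y + φ y := ciInf_le (finite_range _).bddBelow y
    calc D x = ((⨅ z, c x z + φ z) - (c x y + ψ y)) * ρ x := by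
          simp only [D, iInf_eq_of_mem_laguerreCell hx]; ring
      _ ≤ (φ y - ψ y) * ρ x := mul_le_mul_of_nonneg_right (by linarith) (hρnn x)
  have hsplit := setIntegral_eq_sum_setIntegral_laguerreCell hΩ hc hTwist hXΩ hD
    (fun x hx => by simp [D, hρ0 x hx]) ψ
  rw [integral_sub (hint φ) (hint ψ)] at hsplit
  linarith [Finset.sum_le_sum fun y (_ : y ∈ Finset.univ) => hcell y]

end LaguerreCell

theorem kantorovich_maximizer_iff_prescribed_masses_general
    (d : ℕ) (Ω : Set (EuclideanSpace ℝ (Fin d))) (hΩ : IsOpen Ω)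
    (Y : Type*) [Fintype Y] [Nonempty Y]
    (c : EuclideanSpace ℝ (Fin d) → Y → ℝ)
    -- (Reg') : each cost function is continuous on Ω
    (hReg : ∀ y : Y, ContinuousOn (fun x => c x y) Ω)
    -- (Twist') : level sets of differences of costs are Lebesgue-negligible
    (hTwist : ∀ y z : Y, y ≠ z → ∀ t : ℝ,
      volume {x ∈ Ω | c x y - c x z = t} = 0)
    -- X is a compact subset of Ω
    (X : Set (EuclideanSpace ℝ (Fin d))) (hX : IsCompact X) (hXΩ : X ⊆ Ω)
    -- ρ is a bounded probability density supported in X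
    (ρ : EuclideanSpace ℝ (Fin d) → ℝ)
    (hρnn : ∀ x, 0 ≤ ρ x)
    (hρsupp : ∀ x, x ∉ X → ρ x = 0)
    (hρint : ∫ x in X, ρ x = 1)
    -- ν = ∑_y ν_y δ_y is a probability measure on Y
    (ν : Y → ℝ) (hν1 : ∑ y, ν y = 1)
    -- the Kantorovich functional
    (Φ : (Y → ℝ) → ℝ)
    (hΦ : ∀ ψ : Y → ℝ,
      Φ ψ = (∫ x in X, (⨅ y : Y, (c x y + ψ y)) * ρ x) - ∑ y, ψ y * ν y)
    (ψ : Y → ℝ) :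
    (∀ φ : Y → ℝ, Φ φ ≤ Φ ψ) ↔
      (∀ y : Y, (∫ x in {x ∈ Ω | ∀ z : Y, c x y + ψ y ≤ c x z + ψ z}, ρ x) = ν y) := by
  classical
  -- a non-integrable function would have integral `0`, not `1`
  have hρX : IntegrableOn ρ X := Integrable.of_integral_ne_zero (by rw [hρint]; exact one_ne_zero)
  have hρ : Integrable ρ := hρX.integrable_of_forall_notMem_eq_zero hρsupp
  have hsuper : ∀ φ χ : Y → ℝ, Φ φ ≤ Φ χ +
      ∑ y, (φ y - χ y) * ((∫ x in laguerreCell Ω c χ y, ρ x) - ν y) := by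
    intro φ χ
    have := setIntegral_iInf_mul_le hΩ hReg hTwist hX hXΩ hρ hρsupp hρnn φ χ
    simp only [hΦ, mul_sub, sub_mul, Finset.sum_sub_distrib] at this ⊢
    linarith
  have hmass : ∑ y, ν y = ∑ y, ∫ x in laguerreCell Ω c ψ y, ρ x := by
    rw [hν1, ← hρint]
    exact setIntegral_eq_sum_setIntegral_laguerreCell hΩ hReg hTwist hXΩ hρ hρsupp ψ
  change _ ↔ ∀ y, ∫ x in laguerreCell Ω c ψ y, ρ x = ν y
  refine ⟨fun hmax y => ?_, fun hm φ => by simpa [hm] using hsuper φ ψ⟩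
  have hν_le : ∀ y, ν y ≤ ∫ x in laguerreCell Ω c ψ y, ρ x := fun y =>
    le_setIntegral_laguerreCell hΩ hReg hρ fun t ht => by
      have h := hsuper ψ (ψ - Pi.single y t)
      simp only [Pi.sub_apply, Pi.single_apply, sub_sub_cancel, ite_mul, zero_mul,
        Finset.sum_ite_eq', Finset.mem_univ, ↓reduceIte] at h
      nlinarith [hmax (ψ - Pi.single y t)]
  exact ((Finset.sum_eq_sum_iff_of_le fun y _ => hν_le y).1 hmass y (Finset.mem_univ y)).symm

/-- Corollary: ψ maximizes the Kantorovich functional Φ iff every Laguerre cell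
carries exactly the prescribed mass ν_y. -/
theorem kantorovich_maximizer_iff_prescribed_masses
    (d : ℕ) (Ω : Set (EuclideanSpace ℝ (Fin d))) (hΩ : IsOpen Ω)
    (Y : Type*) [Fintype Y] [Nonempty Y]
    (c : EuclideanSpace ℝ (Fin d) → Y → ℝ)
    -- (Reg') : each cost function is continuous on Ω
    (hReg : ∀ y : Y, ContinuousOn (fun x => c x y) Ω)
    -- (Twist') : level sets of differences of costs are Lebesgue-negligible
    (hTwist : ∀ y z : Y, y ≠ z → ∀ t : ℝ,
      volume {x ∈ Ω | c x y - c x z = t} = 0)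
    -- X is a compact subset of Ω
    (X : Set (EuclideanSpace ℝ (Fin d))) (hX : IsCompact X) (hXΩ : X ⊆ Ω)
    -- ρ is a bounded probability density supported in X
    (ρ : EuclideanSpace ℝ (Fin d) → ℝ) (hρmeas : Measurable ρ)
    (hρnn : ∀ x, 0 ≤ ρ x) (Cρ : ℝ) (hρbd : ∀ x, ρ x ≤ Cρ)
    (hρsupp : ∀ x, x ∉ X → ρ x = 0)
    (hρint : ∫ x in X, ρ x = 1)
    -- ν = ∑_y ν_y δ_y is a probability measure on Y
    (ν : Y → ℝ) (hνnn : ∀ y, 0 ≤ ν y) (hν1 : ∑ y, ν y = 1)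
    -- the Kantorovich functional
    (Φ : (Y → ℝ) → ℝ)
    (hΦ : ∀ ψ : Y → ℝ,
      Φ ψ = (∫ x in X, (⨅ y : Y, (c x y + ψ y)) * ρ x) - ∑ y, ψ y * ν y)
    (ψ : Y → ℝ) :
    (∀ φ : Y → ℝ, Φ φ ≤ Φ ψ) ↔
      (∀ y : Y, (∫ x in {x ∈ Ω | ∀ z : Y, c x y + ψ y ≤ c x z + ψ z}, ρ x) = ν y) :=
  kantorovich_maximizer_iff_prescribed_masses_general d Ω hΩ Y c hReg hTwist X hX hXΩ ρ hρnn hρsupp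
    hρint ν hν1 Φ hΦ ψ
end

section
/- Let K be a convex compact subset of ℝ^d and τ > 0. Define the set of τ-singular points Sing(K, τ) := {x ∈ ∂K : ∃ u, v ∈ N_x K with ‖u‖ = ‖v‖ = 1 and ⟨u,v⟩² ≤ 1 − τ²}. Then there exists a constant depending only on d and diam(K) such that ℋ^{d−2}(Sing(K, τ)) ≤ const(d, diam(K)) / τ. -/
/-!
Let `t` be a `τ`-singular point, with unit normals `u, v` such that `⟪u, v⟫² ≤ 1 - τ²`. The angle
between `u` and `v` is at least `τ`, so the normal cone at `t` contains an arc of unit normals of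
length `τ`, hence the planar sector `t + s • w`, `s ∈ [1, 2]`, `w` on that arc. By monotonicity of
the normal cone, `‖(t + w) - (t' + w')‖ ≥ ‖t - t'‖` for normals `w` at `t` and `w'` at `t'`, so the
sectors based at the points of an `ε`-separated set of singular points stay `ε` apart. Each sector
carries about `τ / ε²` grid points at mutual distance `≥ ε / 2`, all in one ball of radius
`diam K + 3`; comparing volumes bounds an `ε`-separated set of singular points by
`(4 (diam K + 3))^d / (τ ε^(d-2))` points. Packing numbers bound covering numbers, and covering
numbers at all small scales bound the Hausdorff measure.
-/

open MeasureTheory Set Metric Filter Topology Module Real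
open scoped RealInnerProductSpace ENNReal NNReal

section Packing

theorem one_le_sq_natCast_sub {j j' : ℕ} (h : j ≠ j') : 1 ≤ ((j : ℝ) - j') ^ 2 := by
  rcases h.lt_or_gt with h | h
  · have : (j : ℝ) + 1 ≤ j' := by exact_mod_cast h
    nlinarith
  · have : (j' : ℝ) + 1 ≤ j := by exact_mod_cast h
    nlinarith

theorem natCast_mul_le_of_lt_floor_div_add_one {x ε : ℝ} (hx : 0 ≤ x) (hε : 0 < ε) {k : ℕ}
    (hk : k < ⌊x / ε⌋₊ + 1) : k * ε ≤ x := by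
  rw [← le_div_iff₀ hε]
  exact (Nat.cast_le.2 (Nat.lt_succ_iff.1 hk)).trans (Nat.floor_le (by positivity))

theorem card_mul_pow_le_of_pairwiseDisjoint_ball {E ι : Type*} [NormedAddCommGroup E]
    [NormedSpace ℝ E] [FiniteDimensional ℝ E] {s : Finset ι} {c : ι → E} {x : E} {r ρ : ℝ}
    (hr : 0 < r) (hρ : 0 < ρ) (hdisj : (s : Set ι).PairwiseDisjoint fun i => ball (c i) r)
    (hsub : ∀ i ∈ s, ball (c i) r ⊆ ball x ρ) :
    (s.card : ℝ) * r ^ finrank ℝ E ≤ ρ ^ finrank ℝ E := by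
  let _ : MeasurableSpace E := borel E
  have _ : BorelSpace E := ⟨rfl⟩
  let μ : Measure E := Measure.addHaar
  have hvol : (s.card : ℝ≥0∞) * μ (ball 0 r) ≤ μ (ball 0 ρ) := calc
    (s.card : ℝ≥0∞) * μ (ball 0 r) = ∑ i ∈ s, μ (ball (c i) r) := by
      simp only [Measure.addHaar_ball_center, Finset.sum_const, nsmul_eq_mul]
    _ = μ (⋃ i ∈ s, ball (c i) r) :=
      (measure_biUnion_finset hdisj fun _ _ => measurableSet_ball).symm
    _ ≤ μ (ball x ρ) := measure_mono (iUnion₂_subset hsub)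
    _ = μ (ball 0 ρ) := Measure.addHaar_ball_center μ x ρ
  have hunit : μ (ball (0 : E) 1) ≠ 0 := (measure_ball_pos μ 0 one_pos).ne'
  rw [Measure.addHaar_ball_of_pos μ 0 hr, Measure.addHaar_ball_of_pos μ 0 hρ, ← mul_assoc,
    ENNReal.mul_le_mul_iff_left hunit measure_ball_lt_top.ne, ← ENNReal.ofReal_natCast,
    ← ENNReal.ofReal_mul (by positivity)] at hvol
  exact (ENNReal.ofReal_le_ofReal_iff (by positivity)).1 hvol

theorem packingNumber_le_ofReal {X : Type*} [PseudoEMetricSpace X] {ε : ℝ≥0} {S : Set X} {a : ℝ}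
    (h : ∀ C : Finset X, ↑C ⊆ S → IsSeparated ε (C : Set X) → (C.card : ℝ) ≤ a) :
    (packingNumber ε S : ℝ≥0∞) ≤ ENNReal.ofReal a := by
  have ha : 0 ≤ a := by simpa using h ∅ (by simp) (by simp)
  suffices hN : packingNumber ε S ≤ ⌊a⌋₊ by
    calc (packingNumber ε S : ℝ≥0∞) ≤ (⌊a⌋₊ : ℕ∞) := ENat.toENNReal_le.2 hN
      _ = ENNReal.ofReal ⌊a⌋₊ := by simp
      _ ≤ ENNReal.ofReal a := ENNReal.ofReal_le_ofReal (Nat.floor_le ha)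
  refine iSup₂_le fun C hCS => iSup_le fun hC => ?_
  by_contra! hlt
  obtain ⟨D, hDC, hD⟩ := exists_subset_encard_eq (Order.add_one_le_of_lt hlt)
  have hDfin : D.Finite := finite_of_encard_eq_coe hD
  have hcard := h hDfin.toFinset (by simpa using hDC.trans hCS) (by simpa using hC.subset hDC)
  rw [hDfin.encard_eq_coe_toFinset_card] at hD
  have hDcard : hDfin.toFinset.card = ⌊a⌋₊ + 1 := by exact_mod_cast hD
  rw [hDcard] at hcard
  push_cast at hcard
  linarith [Nat.lt_floor_add_one a]

theorem hausdorffMeasure_le_of_coveringNumber_le {X : Type*} [EMetricSpace X] [MeasurableSpace X]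
    [BorelSpace X] {S : Set X} {d : ℝ} (hd : 0 ≤ d) {A : ℝ≥0∞}
    (h : ∀ᶠ ε : ℝ≥0 in 𝓝[>] 0, (coveringNumber ε S : ℝ≥0∞) * (ε : ℝ≥0∞) ^ d ≤ A) :
    μH[d] S ≤ 2 ^ d * A := by
  rcases eq_or_ne A ⊤ with rfl | hA
  · simp [ENNReal.mul_top (by positivity : (2 : ℝ≥0∞) ^ d ≠ 0)]
  have hfin : ∀ᶠ ε : ℝ≥0 in 𝓝[>] 0, coveringNumber ε S ≠ ⊤ := by
    filter_upwards [h, self_mem_nhdsWithin] with ε hε hpos hcov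
    have hpow : (ε : ℝ≥0∞) ^ d ≠ 0 :=
      (ENNReal.rpow_pos (by simpa using mem_Ioi.1 hpos) ENNReal.coe_ne_top).ne'
    rw [hcov, ENat.toENNReal_top, ENNReal.top_mul hpow] at hε
    exact hA (top_le_iff.1 hε)
  have hr : Tendsto (fun ε : ℝ≥0 => 2 * (ε : ℝ≥0∞)) (𝓝[>] 0) (𝓝 0) := by
    have : Tendsto (fun ε : ℝ≥0 => 2 * (ε : ℝ≥0∞)) (𝓝 0) (𝓝 (2 * ((0 : ℝ≥0) : ℝ≥0∞))) :=
      ENNReal.Tendsto.const_mul (ENNReal.tendsto_coe.2 tendsto_id) (Or.inr ENNReal.ofNat_ne_top)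
    simpa using this.mono_left nhdsWithin_le_nhds
  have _ : ∀ ε, Countable (minimalCover ε S) := fun _ => finite_minimalCover.countable.to_subtype
  calc μH[d] S
      ≤ liminf (fun ε : ℝ≥0 => ∑' i : minimalCover ε S, ediam (closedEBall (i : X) ε) ^ d)
          (𝓝[>] 0) :=
        Measure.hausdorffMeasure_le_liminf_tsum (ι := fun ε => minimalCover ε S) d S _ hr
          (fun ε i => closedEBall (i : X) ε) (Eventually.of_forall fun _ _ => ediam_closedEBall_le)
          (hfin.mono fun ε hε x hx => by
            obtain ⟨y, hy, hxy⟩ := mem_iUnion₂.1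
              (isCover_iff_subset_iUnion_closedEBall.1 (isCover_minimalCover hε) hx)
            exact mem_iUnion.2 ⟨⟨y, hy⟩, hxy⟩)
    _ ≤ liminf (fun _ => 2 ^ d * A) (𝓝[>] (0 : ℝ≥0)) := by
        refine liminf_le_liminf ?_
        filter_upwards [h, hfin] with ε hε hcov
        calc ∑' i : minimalCover ε S, ediam (closedEBall (i : X) ε) ^ d
            ≤ ∑' _ : minimalCover ε S, (2 * (ε : ℝ≥0∞)) ^ d :=
              ENNReal.tsum_le_tsum fun _ => ENNReal.rpow_le_rpow ediam_closedEBall_le hd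
          _ = 2 ^ d * ((coveringNumber ε S : ℝ≥0∞) * (ε : ℝ≥0∞) ^ d) := by
            rw [ENNReal.tsum_const, ← Set.encard, encard_minimalCover hcov,
              ENNReal.mul_rpow_of_nonneg _ _ hd]
            ring
          _ ≤ 2 ^ d * A := by gcongr
    _ = 2 ^ d * A := liminf_const _

end Packing

section NormalCone

variable {E : Type*} [NormedAddCommGroup E] [InnerProductSpace ℝ E]

def normalCone (K : Set E) (x : E) : Set E := {v | ∀ q ∈ K, ⟪q - x, v⟫ ≤ 0}

def singularSet (K : Set E) (τ : ℝ) : Set E :=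
  {x | x ∈ frontier K ∧ ∃ u v : E, ‖u‖ = 1 ∧ ‖v‖ = 1 ∧
    u ∈ normalCone K x ∧ v ∈ normalCone K x ∧ ⟪u, v⟫ ^ 2 ≤ 1 - τ ^ 2}

variable {K : Set E} {x y u v w : E} {a b τ : ℝ}

theorem smul_mem_normalCone (ha : 0 ≤ a) (hu : u ∈ normalCone K x) : a • u ∈ normalCone K x :=
  fun q hq => by
    rw [real_inner_smul_right]
    exact mul_nonpos_of_nonneg_of_nonpos ha (hu q hq)

theorem smul_add_smul_mem_normalCone (ha : 0 ≤ a) (hb : 0 ≤ b) (hu : u ∈ normalCone K x)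
    (hv : v ∈ normalCone K x) : a • u + b • v ∈ normalCone K x := fun q hq => by
  rw [inner_add_right]
  linarith [smul_mem_normalCone ha hu q hq, smul_mem_normalCone hb hv q hq]

theorem dist_le_dist_add_of_mem_normalCone (hx : x ∈ K) (hy : y ∈ K) (hv : v ∈ normalCone K x)
    (hw : w ∈ normalCone K y) : dist x y ≤ dist (x + v) (y + w) := by
  have hmono : 0 ≤ ⟪x - y, v - w⟫ := by
    have hvy := hv y hy
    rw [← neg_sub, inner_neg_left] at hvy
    rw [inner_sub_right]
    linarith [hw x hx]
  rw [dist_eq_norm, dist_eq_norm, show (x + v) - (y + w) = (x - y) + (v - w) by abel,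
    ← pow_le_pow_iff_left₀ (norm_nonneg _) (norm_nonneg _) two_ne_zero, norm_add_sq_real]
  nlinarith [sq_nonneg ‖v - w‖]

theorem singularSet_subset (hK : IsClosed K) (τ : ℝ) : singularSet K τ ⊆ K :=
  fun _ hx => hK.frontier_subset hx.1

theorem le_one_of_mem_singularSet (hτ : 0 ≤ τ) (hx : x ∈ singularSet K τ) : τ ≤ 1 := by
  obtain ⟨-, u, v, -, -, -, -, huv⟩ := hx
  nlinarith [sq_nonneg ⟪u, v⟫]

end NormalCone

section Arc

variable {E : Type*} [NormedAddCommGroup E] [InnerProductSpace ℝ E]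

/-- For orthonormal `u, e`, the unit circle of the plane they span, parametrized by arc length. -/
noncomputable def unitArc (u e : E) (θ : ℝ) : E := cos θ • u + sin θ • e

variable {u e v : E} {θ θ' α s s' : ℝ}

theorem unitArc_eq_smul_add_smul (hα : sin α ≠ 0) :
    unitArc u e θ = (sin (α - θ) / sin α) • u + (sin θ / sin α) • unitArc u e α := by
  simp only [unitArc, sin_sub, smul_add, smul_smul]
  match_scalars <;> field_simp; ring

theorem inner_unitArc_unitArc (hu : ‖u‖ = 1) (he : ‖e‖ = 1) (hue : ⟪u, e⟫ = 0) :
    ⟪unitArc u e θ, unitArc u e θ'⟫ = cos (θ - θ') := by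
  have huu : ⟪u, u⟫ = 1 := by rw [real_inner_self_eq_norm_sq, hu, one_pow]
  have hee : ⟪e, e⟫ = 1 := by rw [real_inner_self_eq_norm_sq, he, one_pow]
  have heu : ⟪e, u⟫ = 0 := by rw [real_inner_comm, hue]
  simp only [unitArc, inner_add_left, inner_add_right, real_inner_smul_left,
    real_inner_smul_right, huu, hee, hue, heu, cos_sub]
  ring

theorem norm_unitArc (hu : ‖u‖ = 1) (he : ‖e‖ = 1) (hue : ⟪u, e⟫ = 0) : ‖unitArc u e θ‖ = 1 := by
  have h := inner_unitArc_unitArc (θ := θ) (θ' := θ) hu he hue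
  rwa [sub_self, cos_zero, real_inner_self_eq_norm_sq,
    pow_eq_one_iff_of_nonneg (norm_nonneg _) two_ne_zero] at h

theorem sq_add_sq_div_four_le_norm_sub_sq (hu : ‖u‖ = 1) (he : ‖e‖ = 1) (hue : ⟪u, e⟫ = 0)
    (hs : 1 ≤ s) (hs' : 1 ≤ s') (hθ : |θ - θ'| ≤ π) :
    (s - s') ^ 2 + (θ - θ') ^ 2 / 4 ≤ ‖s • unitArc u e θ - s' • unitArc u e θ'‖ ^ 2 := by
  have hexp : ‖s • unitArc u e θ - s' • unitArc u e θ'‖ ^ 2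
      = (s - s') ^ 2 + 2 * (s * s') * (1 - cos (θ - θ')) := by
    rw [← real_inner_self_eq_norm_sq]
    simp only [inner_sub_left, inner_sub_right, real_inner_smul_left, real_inner_smul_right,
      inner_unitArc_unitArc hu he hue, sub_self, cos_zero, real_inner_comm (unitArc u e θ)]
    ring
  have hquad : (θ - θ') ^ 2 / 8 ≤ 1 - cos (θ - θ') := by
    have hpi : π ^ 2 ≤ 16 := by nlinarith [pi_pos, pi_le_four]
    have : (θ - θ') ^ 2 / 8 ≤ 2 / π ^ 2 * (θ - θ') ^ 2 := by
      rw [div_mul_eq_mul_div, le_div_iff₀ (by positivity)]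
      nlinarith [sq_nonneg (θ - θ')]
    linarith [cos_le_one_sub_mul_cos_sq hθ]
  rw [hexp]
  nlinarith [sq_nonneg (θ - θ'), mul_le_mul hs hs' zero_le_one (by linarith)]

theorem half_le_norm_sub_of_polar_grid (hu : ‖u‖ = 1) (he : ‖e‖ = 1) (hue : ⟪u, e⟫ = 0) {ε : ℝ}
    (hε : 0 < ε) {j k j' k' : ℕ} (hne : (j, k) ≠ (j', k')) (hk : k * ε ≤ π) (hk' : k' * ε ≤ π) :
    ε / 2 ≤ ‖(1 + j * ε) • unitArc u e (k * ε) - (1 + j' * ε) • unitArc u e (k' * ε)‖ := by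
  have hθ : |k * ε - k' * ε| ≤ π := abs_sub_le_iff.2
    ⟨by linarith [mul_nonneg k'.cast_nonneg hε.le], by linarith [mul_nonneg k.cast_nonneg hε.le]⟩
  have hpolar := sq_add_sq_div_four_le_norm_sub_sq hu he hue
    (le_add_of_nonneg_right (by positivity : 0 ≤ (j : ℝ) * ε))
    (le_add_of_nonneg_right (by positivity : 0 ≤ (j' : ℝ) * ε)) hθ
  have hgrid : (ε / 2) ^ 2 ≤ (1 + j * ε - (1 + j' * ε)) ^ 2 + (k * ε - k' * ε) ^ 2 / 4 := by
    by_cases hjj : j = j'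
    · subst hjj
      have hkk : k ≠ k' := fun hkk => hne (by rw [hkk])
      nlinarith [one_le_sq_natCast_sub hkk]
    · nlinarith [one_le_sq_natCast_sub hjj, sq_nonneg ((k : ℝ) * ε - k' * ε)]
  exact (pow_le_pow_iff_left₀ (by positivity) (norm_nonneg _) two_ne_zero).1 (hgrid.trans hpolar)

theorem exists_eq_unitArc_arccos (hu : ‖u‖ = 1) (hv : ‖v‖ = 1) (huv : ⟪u, v⟫ ^ 2 < 1) :
    ∃ e : E, ‖e‖ = 1 ∧ ⟪u, e⟫ = 0 ∧ v = unitArc u e (arccos ⟪u, v⟫) := by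
  set c := ⟪u, v⟫ with hc
  have hσ : 0 < √(1 - c ^ 2) := sqrt_pos.2 (by linarith)
  have hσsq : √(1 - c ^ 2) ^ 2 = 1 - c ^ 2 := sq_sqrt (by linarith)
  have huu : ⟪u, u⟫ = 1 := by rw [real_inner_self_eq_norm_sq, hu, one_pow]
  have hvv : ⟪v, v⟫ = 1 := by rw [real_inner_self_eq_norm_sq, hv, one_pow]
  have hperp : ‖v - c • u‖ = √(1 - c ^ 2) := by
    rw [← sq_eq_sq₀ (norm_nonneg _) hσ.le, hσsq, ← real_inner_self_eq_norm_sq]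
    simp only [inner_sub_left, inner_sub_right, real_inner_smul_left, real_inner_smul_right, huu,
      hvv, ← hc, real_inner_comm u v]
    ring
  refine ⟨(√(1 - c ^ 2))⁻¹ • (v - c • u), ?_, ?_, ?_⟩
  · rw [norm_smul, hperp, norm_inv, norm_of_nonneg hσ.le, inv_mul_cancel₀ hσ.ne']
  · rw [real_inner_smul_right, inner_sub_right, real_inner_smul_right, huu, ← hc]
    ring
  · have hc1 : |c| < 1 := by rwa [← sq_lt_one_iff_abs_lt_one]
    rw [unitArc, cos_arccos (abs_lt.1 hc1).1.le (abs_lt.1 hc1).2.le, sin_arccos, smul_smul,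
      mul_inv_cancel₀ hσ.ne', one_smul, add_sub_cancel]

end Arc

section SingularSet

variable {E : Type*} [NormedAddCommGroup E] [InnerProductSpace ℝ E] {K : Set E} {x : E} {τ : ℝ}

/-- The two normals at a `τ`-singular point make an angle `arccos ⟪u, v⟫ ≥ τ`, and every unit vector
between them is a nonnegative combination of them. -/
theorem exists_unitArc_subset_normalCone (hτ : 0 < τ) (hx : x ∈ singularSet K τ) :
    ∃ u e : E, ‖u‖ = 1 ∧ ‖e‖ = 1 ∧ ⟪u, e⟫ = 0 ∧
      ∀ θ ∈ Icc 0 τ, unitArc u e θ ∈ normalCone K x := by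
  obtain ⟨-, u, v, hu, hv, hNu, hNv, huv⟩ := hx
  obtain ⟨e, he, hue, hve⟩ := exists_eq_unitArc_arccos hu hv (by nlinarith)
  set α := arccos ⟪u, v⟫
  have hc1 : |⟪u, v⟫| < 1 := by rw [← sq_lt_one_iff_abs_lt_one]; nlinarith
  have hαπ : α ≤ π := arccos_le_pi _
  have hsin : 0 < sin α :=
    sin_pos_of_pos_of_lt_pi (arccos_pos.2 (abs_lt.1 hc1).2) (arccos_lt_pi.2 (abs_lt.1 hc1).1)
  have hτα : τ ≤ α := calc
    τ ≤ sin α := by rw [sin_arccos]; exact le_sqrt_of_sq_le (by linarith)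
    _ ≤ α := sin_le (arccos_nonneg _)
  refine ⟨u, e, hu, he, hue, fun θ ⟨hθ0, hθτ⟩ => ?_⟩
  rw [unitArc_eq_smul_add_smul hsin.ne', ← hve]
  refine smul_add_smul_mem_normalCone (div_nonneg ?_ hsin.le) (div_nonneg ?_ hsin.le) hNu hNv
  · exact sin_nonneg_of_nonneg_of_le_pi (by linarith) (by linarith)
  · exact sin_nonneg_of_nonneg_of_le_pi hθ0 (by linarith)

theorem two_le_finrank_of_mem_singularSet [FiniteDimensional ℝ E] (hτ : 0 < τ)
    (hx : x ∈ singularSet K τ) : 2 ≤ finrank ℝ E := by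
  obtain ⟨u, e, hu, he, hue, -⟩ := exists_unitArc_subset_normalCone hτ hx
  have hind : LinearIndependent ℝ ![u, e] := by
    refine LinearIndependent.pair_iff.2 fun a b hab => ⟨?_, ?_⟩
    · simpa [inner_add_right, real_inner_smul_right, hue, real_inner_self_eq_norm_sq, hu] using
        congrArg (⟪u, ·⟫) hab
    · simpa [inner_add_right, real_inner_smul_right, real_inner_comm u e, hue,
        real_inner_self_eq_norm_sq, he] using congrArg (⟪e, ·⟫) hab
  simpa using hind.fintype_card_le_finrank

/-- The balls of radius `ε / 4` around the grid points `t + (1 + j ε) • w_t (k ε)`, `t ∈ T`, `j < J`,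
`k < L`, where `w_t` is an arc of unit normals at `t`, are disjoint and lie in one ball of radius
`diam K + 3`. -/
theorem card_mul_mul_pow_le_of_sector_grid [FiniteDimensional ℝ E] (hK : IsCompact K)
    {R ε : ℝ} (hdiam : diam K ≤ R) (hτ : 0 < τ) (hτ1 : τ ≤ 1) (hε : 0 < ε) (hε1 : ε ≤ 1)
    {T : Finset E} (hTS : ↑T ⊆ singularSet K τ) (hsep : (T : Set E).Pairwise (ε < dist · ·))
    {J L : ℕ} (hJ : ∀ j < J, j * ε ≤ 1) (hL : ∀ k < L, k * ε ≤ τ) :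
    (T.card * J * L : ℝ) * (ε / 4) ^ finrank ℝ E ≤ (R + 3) ^ finrank ℝ E := by
  have hR : 0 ≤ R := diam_nonneg.trans hdiam
  rcases T.eq_empty_or_nonempty with rfl | ⟨x₀, hx₀⟩
  · simp only [Finset.card_empty, Nat.cast_zero, zero_mul]
    positivity
  have hTK : ∀ t ∈ T, t ∈ K := fun t ht => singularSet_subset hK.isClosed τ (hTS ht)
  choose! u e hu he hue harc using fun t (ht : t ∈ T) =>
    exists_unitArc_subset_normalCone hτ (hTS ht)
  set I := T ×ˢ (Finset.range J ×ˢ Finset.range L)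
  set c : E × ℕ × ℕ → E := fun p => p.1 + (1 + p.2.1 * ε) • unitArc (u p.1) (e p.1) (p.2.2 * ε)
  have hθ : ∀ k < L, k * ε ∈ Icc 0 τ := fun k hk => ⟨by positivity, hL k hk⟩
  have hdisj : (I : Set (E × ℕ × ℕ)).PairwiseDisjoint fun p => ball (c p) (ε / 4) := by
    rintro ⟨t, j, k⟩ hp ⟨t', j', k'⟩ hq hne
    simp only [I, Finset.coe_product, mem_prod, Finset.mem_coe, Finset.mem_range] at hp hq
    refine ball_disjoint_ball ?_
    by_cases htt : t = t'
    · subst htt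
      have hπ : ∀ k < L, k * ε ≤ π := fun k hk => by linarith [hL k hk, pi_gt_three]
      rw [show ε / 4 + ε / 4 = ε / 2 by ring, dist_eq_norm]
      simp only [c, add_sub_add_left_eq_sub]
      exact half_le_norm_sub_of_polar_grid (hu t hp.1) (he t hp.1) (hue t hp.1) hε
        (fun h => hne (by rw [h])) (hπ k hp.2.2) (hπ k' hq.2.2)
    · calc ε / 4 + ε / 4 ≤ ε := by linarith
        _ ≤ dist t t' := (hsep hp.1 hq.1 htt).le
        _ ≤ dist (c (t, j, k)) (c (t', j', k')) :=
          dist_le_dist_add_of_mem_normalCone (hTK t hp.1) (hTK t' hq.1)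
            (smul_mem_normalCone (by positivity) (harc t hp.1 _ (hθ k hp.2.2)))
            (smul_mem_normalCone (by positivity) (harc t' hq.1 _ (hθ k' hq.2.2)))
  have hsub : ∀ p ∈ I, ball (c p) (ε / 4) ⊆ ball x₀ (R + 3) := by
    rintro ⟨t, j, k⟩ hp
    simp only [I, Finset.mem_product, Finset.mem_range] at hp
    have hct : dist (c (t, j, k)) t ≤ 2 := by
      rw [dist_self_add_left, norm_smul, norm_unitArc (hu t hp.1) (he t hp.1) (hue t hp.1), mul_one,
        norm_of_nonneg (by positivity)]
      linarith [hJ j hp.2.1]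
    have ht : dist t x₀ ≤ R :=
      (dist_le_diam_of_mem hK.isBounded (hTK t hp.1) (hTK x₀ hx₀)).trans hdiam
    exact ball_subset_ball' (by linarith [dist_triangle (c (t, j, k)) t x₀, hL k hp.2.2])
  have hcount := card_mul_pow_le_of_pairwiseDisjoint_ball (by positivity) (by positivity) hdisj hsub
  simpa [I, mul_assoc] using hcount

theorem card_mul_pow_le_of_subset_singularSet [FiniteDimensional ℝ E] (hK : IsCompact K)
    {R ε : ℝ} (hdiam : diam K ≤ R) (hτ : 0 < τ) (hτ1 : τ ≤ 1) (hε : 0 < ε) (hε1 : ε ≤ 1)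
    {T : Finset E} (hTS : ↑T ⊆ singularSet K τ) (hsep : (T : Set E).Pairwise (ε < dist · ·)) :
    (T.card : ℝ) * τ * (ε / 4) ^ finrank ℝ E ≤ ε ^ 2 * (R + 3) ^ finrank ℝ E := by
  have hgrid := card_mul_mul_pow_le_of_sector_grid hK hdiam hτ hτ1 hε hε1 hTS hsep
    (J := ⌊1 / ε⌋₊ + 1) (L := ⌊τ / ε⌋₊ + 1)
    (fun _ hj => natCast_mul_le_of_lt_floor_div_add_one zero_le_one hε hj)
    (fun _ hk => natCast_mul_le_of_lt_floor_div_add_one hτ.le hε hk)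
  have hJ : 1 / ε ≤ (⌊1 / ε⌋₊ + 1 : ℕ) := by simpa using (Nat.lt_floor_add_one (1 / ε)).le
  have hL : τ / ε ≤ (⌊τ / ε⌋₊ + 1 : ℕ) := by simpa using (Nat.lt_floor_add_one (τ / ε)).le
  calc (T.card : ℝ) * τ * (ε / 4) ^ finrank ℝ E
      = ε ^ 2 * (T.card * (1 / ε) * (τ / ε) * (ε / 4) ^ finrank ℝ E) := by field_simp
    _ ≤ ε ^ 2 * (T.card * (⌊1 / ε⌋₊ + 1 : ℕ) * (⌊τ / ε⌋₊ + 1 : ℕ) * (ε / 4) ^ finrank ℝ E) := by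
        gcongr
    _ ≤ ε ^ 2 * (R + 3) ^ finrank ℝ E := by gcongr

theorem coveringNumber_singularSet_mul_rpow_le [FiniteDimensional ℝ E] (hK : IsCompact K)
    {R : ℝ} (hdiam : diam K ≤ R) (hτ : 0 < τ) (hτ1 : τ ≤ 1) {m : ℕ} (hm : finrank ℝ E = m + 2)
    {ε : ℝ≥0} (hε : 0 < ε) (hε1 : ε ≤ 1) :
    (coveringNumber ε (singularSet K τ) : ℝ≥0∞) * (ε : ℝ≥0∞) ^ (m : ℝ) ≤
      ENNReal.ofReal (4 ^ (m + 2) * (R + 3) ^ (m + 2) / τ) := by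
  have hε' : (0 : ℝ) < ε := hε
  have hR : 0 ≤ R := diam_nonneg.trans hdiam
  have hpacking : ∀ C : Finset E, ↑C ⊆ singularSet K τ → IsSeparated ε (C : Set E) →
      (C.card : ℝ) ≤ 4 ^ (m + 2) * (R + 3) ^ (m + 2) / (τ * ε ^ m) := fun C hCS hC => by
    have hsep : (C : Set E).Pairwise (ε < dist · ·) := fun x hx y hy hxy => by
      simpa [edist_dist] using hC hx hy hxy
    have hbound := card_mul_pow_le_of_subset_singularSet hK hdiam hτ hτ1 hε' hε1 hCS hsep
    rw [hm] at hbound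
    rw [le_div_iff₀ (by positivity)]
    calc (C.card : ℝ) * (τ * ε ^ m) = 4 ^ (m + 2) / ε ^ 2 * (C.card * τ * (ε / 4) ^ (m + 2)) := by
          rw [div_pow]
          field_simp
          ring
      _ ≤ 4 ^ (m + 2) / ε ^ 2 * (ε ^ 2 * (R + 3) ^ (m + 2)) := by gcongr
      _ = 4 ^ (m + 2) * (R + 3) ^ (m + 2) := by field_simp
  calc (coveringNumber ε (singularSet K τ) : ℝ≥0∞) * (ε : ℝ≥0∞) ^ (m : ℝ)
      ≤ (packingNumber ε (singularSet K τ) : ℝ≥0∞) * (ε : ℝ≥0∞) ^ (m : ℝ) := by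
        gcongr
        exact coveringNumber_le_packingNumber ε _
    _ ≤ ENNReal.ofReal (4 ^ (m + 2) * (R + 3) ^ (m + 2) / (τ * ε ^ m)) * ENNReal.ofReal (ε ^ m) := by
        rw [ENNReal.rpow_natCast, ← ENNReal.ofReal_coe_nnreal, ENNReal.ofReal_pow hε'.le]
        gcongr
        exact packingNumber_le_ofReal hpacking
    _ = ENNReal.ofReal (4 ^ (m + 2) * (R + 3) ^ (m + 2) / τ) := by
        rw [← ENNReal.ofReal_mul (by positivity)]
        congr 1
        field_simp

end SingularSet

/-- Proposition: the set of τ-singular boundary points of a compact convex set K of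
ℝ^d has ℋ^{d-2}-measure at most const(d, diam K)/τ. -/
theorem hausdorff_measure_singular_points
    (d : ℕ) (R : ℝ) :
    ∃ C : ℝ, ∀ K : Set (EuclideanSpace ℝ (Fin d)),
      Convex ℝ K → IsCompact K → diam K ≤ R →
      ∀ τ : ℝ, 0 < τ →
        μH[(d : ℝ) - 2]
          {x : EuclideanSpace ℝ (Fin d) | x ∈ frontier K ∧
            ∃ u v : EuclideanSpace ℝ (Fin d), ‖u‖ = 1 ∧ ‖v‖ = 1 ∧
              (∀ q ∈ K, (inner ℝ (q - x) u : ℝ) ≤ 0) ∧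
              (∀ q ∈ K, (inner ℝ (q - x) v : ℝ) ≤ 0) ∧
              (inner ℝ u v : ℝ) ^ 2 ≤ 1 - τ ^ 2} ≤
        ENNReal.ofReal (C / τ) := by
  refine ⟨2 ^ (d - 2) * 4 ^ d * (R + 3) ^ d, fun K _ hK hdiam τ hτ => ?_⟩
  change μH[(d : ℝ) - 2] (singularSet K τ) ≤ _
  rcases (singularSet K τ).eq_empty_or_nonempty with hS | ⟨x, hx⟩
  · simp [hS]
  obtain ⟨m, rfl⟩ : ∃ m, d = m + 2 :=
    Nat.exists_eq_add_of_le' (by simpa using two_le_finrank_of_mem_singularSet hτ hx)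
  calc μH[((m + 2 : ℕ) : ℝ) - 2] (singularSet K τ)
      ≤ 2 ^ (m : ℝ) * ENNReal.ofReal (4 ^ (m + 2) * (R + 3) ^ (m + 2) / τ) := by
        rw [show ((m + 2 : ℕ) : ℝ) - 2 = m by push_cast; ring]
        refine hausdorffMeasure_le_of_coveringNumber_le m.cast_nonneg ?_
        filter_upwards [Ioc_mem_nhdsGT zero_lt_one] with ε ⟨hε0, hε1⟩
        exact coveringNumber_singularSet_mul_rpow_le hK hdiam hτ
          (le_one_of_mem_singularSet hτ.le hx) (by simp) hε0 hε1
    _ = ENNReal.ofReal (2 ^ (m + 2 - 2) * 4 ^ (m + 2) * (R + 3) ^ (m + 2) / τ) := by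
        rw [ENNReal.rpow_natCast, ← ENNReal.ofReal_ofNat, ← ENNReal.ofReal_pow zero_le_two,
          ← ENNReal.ofReal_mul (by positivity)]
        congr 1
        simp only [Nat.add_sub_cancel]
        ring
end
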